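/- Let S have continuous local time L^{π,p}_t(S) > 0 of order p at zero along the Lebesgue partitions π_n generated by hitting times of the grid δ_n·ℤ with δ_n = 2^{−n}. Then: (i) if 1 ≤ p < 2, δ_n·D^{δ_n}_t(S) → 0; (ii) if p > 2, D^{δ_n}_t(S) ~ L^{π,p}_t(S)/δ_n^{p−1} and δ_n·D^{δ_n}_t(S) → ∞; (iii) if p = 2, δ_n·D^{δ_n}_t(S) → L^{π,2}_t(S). -/

import Mathlib

open scoped ENNReal
open Filter
noncomputable section

def hitAfter (S : ℝ → ℝ) (P : ℝ → Prop) (a : ℝ≥0∞) : ℝ≥0∞ :=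
  sInf {t : ℝ≥0∞ | a < t ∧ t < ⊤ ∧ P (S t.toReal)}

def thetaSeq (S : ℝ → ℝ) (δ : ℝ) : ℕ → ℝ≥0∞
  | 0 => 0
  | n + 1 => hitAfter S (fun x => x ≤ 0) (hitAfter S (fun x => δ ≤ x) (thetaSeq S δ n))

/-- Number of downcrossings of `[0, δ]` by time `t`. -/
def Dnum (S : ℝ → ℝ) (δ : ℝ) (t : ℝ) : ℕ :=
  {i : ℕ | 1 ≤ i ∧ thetaSeq S δ i ≤ ENNReal.ofReal t}.ncard

def clip (t : ℝ) (a : ℝ≥0∞) : ℝ := if a < ⊤ then min t a.toReal else t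

/-- The Lebesgue partition generated by the successive hitting times of the grid `δℤ`:
`t₀ = 0`, `tₖ₊₁ = inf {u ≥ tₖ : S_u ∈ δℤ \ {S_{tₖ}}}`. -/
def gridTimes (S : ℝ → ℝ) (δ : ℝ) : ℕ → ℝ≥0∞
  | 0 => 0
  | n + 1 => sInf {u : ℝ≥0∞ | gridTimes S δ n ≤ u ∧ u < ⊤ ∧
      (∃ m : ℤ, S u.toReal = δ * m) ∧ S u.toReal ≠ S ((gridTimes S δ n).toReal)}

/-- Partition sum `L^{πₙ,p}_t(S, x) = Σⱼ 1_{[S_{tⱼ∧t}, S_{tⱼ₊₁∧t})}(x) |S_{tⱼ₊₁∧t} - x|^{p-1}`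
defining the order-`p` local time along the Lebesgue partition of mesh `δ`. -/
def Lsum (S : ℝ → ℝ) (p δ t x : ℝ) : ℝ :=
  ∑' j : ℕ, Set.indicator
    (Set.Ico (S (clip t (gridTimes S δ j))) (S (clip t (gridTimes S δ (j + 1)))))
    (fun _ => |S (clip t (gridTimes S δ (j + 1))) - x| ^ (p - 1)) x

section Aux

variable {S : ℝ → ℝ} {δ : ℝ}

lemma attain (hS : Continuous S) {C : Set ℝ} (hC : IsClosed C) {A : Set ℝ≥0∞}
    (hsub : ∀ u ∈ A, S u.toReal ∈ C) (hfin : sInf A ≠ ⊤) :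
    S (sInf A).toReal ∈ C := by
  have hne : A.Nonempty := by
    rcases A.eq_empty_or_nonempty with h | h
    · exfalso; rw [h, sInf_empty] at hfin; exact hfin rfl
    · exact h
  have hx : sInf A ∈ closure A := (isGLB_sInf A).mem_closure hne
  rw [mem_closure_iff_seq_limit] at hx
  obtain ⟨x, hxA, hxlim⟩ := hx
  have h1 : Tendsto (fun n => (x n).toReal) atTop (nhds (sInf A).toReal) :=
    (ENNReal.tendsto_toReal hfin).comp hxlim
  have h2 : Tendsto (fun n => S (x n).toReal) atTop (nhds (S (sInf A).toReal)) :=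
    (hS.tendsto _).comp h1
  exact hC.mem_of_tendsto h2 (Eventually.of_forall fun n => hsub _ (hxA n))

lemma isClosedEmbedding_gridmap (hδ : 0 < δ) :
    Topology.IsClosedEmbedding (fun m : ℤ => δ * (m : ℝ)) := by
  have h2 : Topology.IsClosedEmbedding (fun x : ℝ => δ * x) :=
    (Homeomorph.mulLeft₀ δ hδ.ne').isClosedEmbedding
  exact h2.comp Int.isClosedEmbedding_coe_real

lemma isClosed_gridDiff (hδ : 0 < δ) (v : ℝ) :
    IsClosed {x : ℝ | (∃ m : ℤ, x = δ * m) ∧ x ≠ v} := by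
  have he : {x : ℝ | (∃ m : ℤ, x = δ * m) ∧ x ≠ v} =
      (fun m : ℤ => δ * (m : ℝ)) '' {m : ℤ | δ * (m : ℝ) ≠ v} := by
    ext x
    constructor
    · rintro ⟨⟨m, rfl⟩, hne⟩; exact ⟨m, hne, rfl⟩
    · rintro ⟨m, hm, rfl⟩; exact ⟨⟨m, rfl⟩, hm⟩
  rw [he]
  exact (isClosedEmbedding_gridmap hδ).isClosedMap _ (isClosed_discrete _)

end Aux

section Grid

variable {S : ℝ → ℝ} {δ : ℝ}

lemma gridTimes_succ (S : ℝ → ℝ) (δ : ℝ) (n : ℕ) :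
    gridTimes S δ (n + 1) = sInf {u : ℝ≥0∞ | gridTimes S δ n ≤ u ∧ u < ⊤ ∧
      (∃ m : ℤ, S u.toReal = δ * m) ∧ S u.toReal ≠ S ((gridTimes S δ n).toReal)} := rfl

lemma gridTimes_mono (S : ℝ → ℝ) (δ : ℝ) : Monotone (gridTimes S δ) := by
  apply monotone_nat_of_le_succ
  intro n
  rw [gridTimes_succ]
  exact le_sInf fun u hu => hu.1

lemma gridTimes_val (hS : Continuous S) (hδ : 0 < δ) {n : ℕ}
    (h : gridTimes S δ (n + 1) ≠ ⊤) :
    (∃ m : ℤ, S (gridTimes S δ (n + 1)).toReal = δ * m) ∧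
      S (gridTimes S δ (n + 1)).toReal ≠ S ((gridTimes S δ n).toReal) := by
  rw [gridTimes_succ] at h ⊢
  exact attain hS (isClosed_gridDiff hδ _)
    (fun u hu => ⟨hu.2.2.1, hu.2.2.2⟩) h

lemma gridTimes_not_mem {n : ℕ} {u : ℝ≥0∞} (h : u < gridTimes S δ (n + 1)) :
    ¬(gridTimes S δ n ≤ u ∧ u < ⊤ ∧ (∃ m : ℤ, S u.toReal = δ * m) ∧
        S u.toReal ≠ S ((gridTimes S δ n).toReal)) := by
  intro hu
  have hmem : u ∈ {u : ℝ≥0∞ | gridTimes S δ n ≤ u ∧ u < ⊤ ∧ (∃ m : ℤ, S u.toReal = δ * m) ∧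
      S u.toReal ≠ S ((gridTimes S δ n).toReal)} := hu
  rw [gridTimes_succ] at h
  exact absurd (sInf_le hmem) (not_le.mpr h)

lemma gridTimes_val_mem (hS : Continuous S) (hδ : 0 < δ) (hS0 : S 0 = 0) :
    ∀ n : ℕ, gridTimes S δ n ≠ ⊤ → ∃ m : ℤ, S (gridTimes S δ n).toReal = δ * m := by
  intro n hn
  cases n with
  | zero =>
    refine ⟨0, ?_⟩
    show S (ENNReal.toReal 0) = δ * ((0 : ℤ) : ℝ)
    rw [ENNReal.toReal_zero, hS0]; push_cast; ring
  | succ k => exact (gridTimes_val hS hδ hn).1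

/-- Between consecutive grid times, the path stays within `δ` of its current grid value. -/
lemma grid_between (hS : Continuous S) (hδ : 0 < δ) (hS0 : S 0 = 0) {n : ℕ} {u : ℝ}
    (hn : gridTimes S δ n ≠ ⊤)
    (h1 : (gridTimes S δ n).toReal ≤ u) (h2 : ENNReal.ofReal u < gridTimes S δ (n + 1)) :
    |S u - S ((gridTimes S δ n).toReal)| < δ := by
  set a := (gridTimes S δ n).toReal with ha
  have h0a : 0 ≤ a := ENNReal.toReal_nonneg
  have h0u : 0 ≤ u := le_trans h0a h1
  obtain ⟨m, hm⟩ := gridTimes_val_mem hS hδ hS0 n hn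
  by_contra hcon
  push_neg at hcon
  have hw : ∃ w, a ≤ w ∧ w ≤ u ∧ (S w = S a + δ ∨ S w = S a - δ) := by
    rcases le_abs.mp hcon with hc | hc
    · -- δ ≤ S u - S a
      obtain ⟨w, hw1, hw2⟩ := intermediate_value_Icc h1 hS.continuousOn
        (⟨by linarith, by linarith⟩ : S a + δ ∈ Set.Icc (S a) (S u))
      exact ⟨w, hw1.1, hw1.2, Or.inl hw2⟩
    · -- δ ≤ -(S u - S a)
      obtain ⟨w, hw1, hw2⟩ := intermediate_value_Icc' h1 hS.continuousOn
        (⟨by linarith, by linarith⟩ : S a - δ ∈ Set.Icc (S u) (S a))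
      exact ⟨w, hw1.1, hw1.2, Or.inr hw2⟩
  obtain ⟨w, hw1, hw2, hw3⟩ := hw
  have h0w : 0 ≤ w := le_trans h0a hw1
  apply gridTimes_not_mem (S := S) (n := n) (u := ENNReal.ofReal w)
    (lt_of_le_of_lt (ENNReal.ofReal_le_ofReal hw2) h2)
  have htw : (ENNReal.ofReal w).toReal = w := ENNReal.toReal_ofReal h0w
  refine ⟨?_, ENNReal.ofReal_lt_top, ?_, ?_⟩
  · rw [← ENNReal.ofReal_toReal hn, ← ha]
    exact ENNReal.ofReal_le_ofReal hw1
  · rw [htw]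
    rcases hw3 with h | h
    · exact ⟨m + 1, by rw [h, hm]; push_cast; ring⟩
    · exact ⟨m - 1, by rw [h, hm]; push_cast; ring⟩
  · rw [htw]
    rcases hw3 with h | h <;> rw [h] <;> intro hbad <;> nlinarith

end Grid

section Grid2
variable {S : ℝ → ℝ} {δ : ℝ}

/-- Consecutive grid values are adjacent grid points. -/
lemma grid_adj (hS : Continuous S) (hδ : 0 < δ) (hS0 : S 0 = 0) {n : ℕ}
    (h : gridTimes S δ (n + 1) ≠ ⊤) :
    S (gridTimes S δ (n + 1)).toReal = S ((gridTimes S δ n).toReal) + δ ∨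
      S (gridTimes S δ (n + 1)).toReal = S ((gridTimes S δ n).toReal) - δ := by
  have hn : gridTimes S δ n ≠ ⊤ :=
    fun hh => h (top_le_iff.mp (hh ▸ gridTimes_mono S δ (Nat.le_succ n)))
  set a := (gridTimes S δ n).toReal with ha
  set b := (gridTimes S δ (n + 1)).toReal with hb
  have h0a : 0 ≤ a := ENNReal.toReal_nonneg
  have hab : a ≤ b := ENNReal.toReal_mono h (gridTimes_mono S δ (Nat.le_succ n))
  obtain ⟨m, hm⟩ := gridTimes_val_mem hS hδ hS0 n hn
  obtain ⟨⟨m', hm'⟩, hne⟩ := gridTimes_val hS hδ h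
  -- first: |S b - S a| < 2δ
  have hlt : |S b - S a| < 2 * δ := by
    by_contra hcon
    push_neg at hcon
    have hw : ∃ w, a ≤ w ∧ w ≤ b ∧ (S w = S a + δ ∨ S w = S a - δ) := by
      rcases le_abs.mp hcon with hc | hc
      · obtain ⟨w, hw1, hw2⟩ := intermediate_value_Icc hab hS.continuousOn
          (⟨by linarith, by linarith⟩ : S a + δ ∈ Set.Icc (S a) (S b))
        exact ⟨w, hw1.1, hw1.2, Or.inl hw2⟩
      · obtain ⟨w, hw1, hw2⟩ := intermediate_value_Icc' hab hS.continuousOn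
          (⟨by linarith, by linarith⟩ : S a - δ ∈ Set.Icc (S b) (S a))
        exact ⟨w, hw1.1, hw1.2, Or.inr hw2⟩
    obtain ⟨w, hw1, hw2, hw3⟩ := hw
    -- w ≠ b since S b is 2δ away from S a
    have hwb : w < b := by
      rcases lt_or_eq_of_le hw2 with h' | h'
      · exact h'
      · exfalso
        rcases le_abs.mp hcon with hc | hc <;> rcases hw3 with h3 | h3 <;>
          rw [h'] at h3 <;> nlinarith
    have h0w : 0 ≤ w := le_trans h0a hw1
    have hofw : ENNReal.ofReal w < gridTimes S δ (n + 1) := by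
      rw [← ENNReal.ofReal_toReal h, ← hb]
      exact (ENNReal.ofReal_lt_ofReal_iff (lt_of_le_of_lt h0w hwb)).mpr hwb
    have := grid_between hS hδ hS0 hn (hw1 : a ≤ w) hofw
    rw [← ha] at this
    rcases hw3 with h3 | h3 <;> rw [h3] at this <;>
      [skip; skip] <;> simp [abs_of_nonneg, abs_of_nonpos, hδ.le] at this <;> linarith
  -- integers within < 2δ apart and distinct grid points differ by exactly δ
  have hd : S b - S a = δ * ((m' - m : ℤ) : ℝ) := by rw [hm, hm']; push_cast; ring
  have hmm : m' ≠ m := by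
    intro hq; rw [hq] at hm'; exact hne (hm'.trans hm.symm)
  have habs : |((m' - m : ℤ) : ℝ)| < 2 := by
    rw [hd, abs_mul, abs_of_pos hδ] at hlt
    nlinarith [abs_nonneg ((m' - m : ℤ) : ℝ)]
  have habs' : |m' - m| < 2 := by
    rw [← Int.cast_abs] at habs
    exact_mod_cast habs
  have : m' - m = 1 ∨ m' - m = -1 := by
    rcases abs_lt.mp habs' with ⟨hl, hr⟩
    omega
  rcases this with h' | h'
  · left; rw [hm, hm']
    have : (m' : ℝ) = (m : ℝ) + 1 := by
      have : m' = m + 1 := by omega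
      exact_mod_cast this
    rw [this]; ring
  · right; rw [hm, hm']
    have : (m' : ℝ) = (m : ℝ) - 1 := by
      have : m' = m - 1 := by omega
      exact_mod_cast this
    rw [this]; ring

end Grid2

section Grid3
variable {S : ℝ → ℝ} {δ : ℝ}

lemma gridTimes_strict (hS : Continuous S) (hδ : 0 < δ) {n : ℕ}
    (h : gridTimes S δ (n + 1) ≠ ⊤) : gridTimes S δ n < gridTimes S δ (n + 1) := by
  rcases lt_or_eq_of_le (gridTimes_mono S δ (Nat.le_succ n)) with h' | h'
  · exact h'
  · exfalso
    exact (gridTimes_val hS hδ h).2 (by rw [← h'])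

lemma gridTimes_finite (hS : Continuous S) (hδ : 0 < δ) (hS0 : S 0 = 0)
    {T : ℝ≥0∞} (hT : T ≠ ⊤) : {n : ℕ | gridTimes S δ n ≤ T}.Finite := by
  by_contra hinf
  have hall : ∀ n, gridTimes S δ n ≤ T := by
    intro n
    by_contra hn
    have hsub : {k : ℕ | gridTimes S δ k ≤ T} ⊆ Set.Iio n := by
      intro k hk
      simp only [Set.mem_setOf_eq] at hk
      simp only [Set.mem_Iio]
      by_contra hkn
      exact hn (le_trans (gridTimes_mono S δ (not_lt.mp hkn)) hk)
    exact hinf ((Set.finite_Iio n).subset hsub)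
  have hne : ∀ n, gridTimes S δ n ≠ ⊤ := fun n => (lt_of_le_of_lt (hall n) (lt_top_iff_ne_top.mpr hT)).ne
  set ℓ := ⨆ n, gridTimes S δ n with hℓ
  have hℓT : ℓ ≤ T := iSup_le hall
  have hℓne : ℓ ≠ ⊤ := (lt_of_le_of_lt hℓT (lt_top_iff_ne_top.mpr hT)).ne
  have htend : Tendsto (gridTimes S δ) atTop (nhds ℓ) := tendsto_atTop_iSup (gridTimes_mono S δ)
  have h1 : Tendsto (fun n => S (gridTimes S δ n).toReal) atTop (nhds (S ℓ.toReal)) :=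
    (hS.tendsto _).comp ((ENNReal.tendsto_toReal hℓne).comp htend)
  have h2 : Tendsto (fun n => S (gridTimes S δ (n + 1)).toReal) atTop (nhds (S ℓ.toReal)) :=
    h1.comp (tendsto_add_atTop_nat 1)
  have h3 : Tendsto (fun n => S (gridTimes S δ (n + 1)).toReal - S (gridTimes S δ n).toReal)
      atTop (nhds 0) := by
    have := h2.sub h1
    simpa using this
  have h4 : ∀ᶠ n in atTop, |S (gridTimes S δ (n + 1)).toReal - S (gridTimes S δ n).toReal| < δ := by
    have := h3.abs
    simp only [abs_zero] at this
    exact this.eventually_lt_const hδ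
  obtain ⟨n, hn⟩ := h4.exists
  rcases grid_adj hS hδ hS0 (hne (n + 1)) with h' | h' <;> rw [h'] at hn <;>
    simp [abs_of_nonneg, abs_of_nonpos, hδ.le] at hn <;> linarith [abs_of_pos hδ]

end Grid3

section Theta
variable {S : ℝ → ℝ} {δ : ℝ}

lemma hitAfter_le_self (S : ℝ → ℝ) (P : ℝ → Prop) (a : ℝ≥0∞) : a ≤ hitAfter S P a :=
  le_sInf fun _ hb => hb.1.le

lemma hitAfter_le_of_mem {P : ℝ → Prop} {a b : ℝ≥0∞} (hab : a < b) (hb : b ≠ ⊤)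
    (hP : P (S b.toReal)) : hitAfter S P a ≤ b :=
  sInf_le ⟨hab, lt_top_iff_ne_top.mpr hb, hP⟩

lemma hitAfter_attain (hS : Continuous S) {C : Set ℝ} (hC : IsClosed C) {a : ℝ≥0∞}
    (h : hitAfter S (fun x => x ∈ C) a ≠ ⊤) :
    S (hitAfter S (fun x => x ∈ C) a).toReal ∈ C :=
  attain hS hC (fun _ hu => hu.2.2) h

lemma tau_attain (hS : Continuous S) {a : ℝ≥0∞}
    (h : hitAfter S (fun x => δ ≤ x) a ≠ ⊤) :
    δ ≤ S (hitAfter S (fun x => δ ≤ x) a).toReal := by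
  have : (fun x : ℝ => δ ≤ x) = fun x => x ∈ Set.Ici δ := rfl
  rw [this] at h ⊢
  exact hitAfter_attain hS isClosed_Ici h

lemma down_attain (hS : Continuous S) {a : ℝ≥0∞}
    (h : hitAfter S (fun x => x ≤ 0) a ≠ ⊤) :
    S (hitAfter S (fun x => x ≤ 0) a).toReal ≤ 0 := by
  have : (fun x : ℝ => x ≤ 0) = fun x => x ∈ Set.Iic 0 := rfl
  rw [this] at h ⊢
  exact hitAfter_attain hS isClosed_Iic h

lemma thetaSeq_succ (S : ℝ → ℝ) (δ : ℝ) (i : ℕ) :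
    thetaSeq S δ (i + 1) =
      hitAfter S (fun x => x ≤ 0) (hitAfter S (fun x => δ ≤ x) (thetaSeq S δ i)) := rfl

lemma thetaSeq_mono (S : ℝ → ℝ) (δ : ℝ) : Monotone (thetaSeq S δ) := by
  apply monotone_nat_of_le_succ
  intro i
  rw [thetaSeq_succ]
  exact le_trans (hitAfter_le_self S _ _) (hitAfter_le_self S _ _)

lemma theta_le_zero (hS : Continuous S) (hS0 : S 0 = 0) {i : ℕ}
    (h : thetaSeq S δ i ≠ ⊤) : S (thetaSeq S δ i).toReal ≤ 0 := by
  cases i with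
  | zero =>
    show S (ENNReal.toReal 0) ≤ 0
    rw [ENNReal.toReal_zero, hS0]
  | succ k =>
    rw [thetaSeq_succ] at h ⊢
    exact down_attain hS h

/-- Minimality of the downcrossing times: any alternating sequence of
reach-`δ` / return-to-`0` times dominates the `thetaSeq`. -/
lemma theta_le (hS : Continuous S) (hδ : 0 < δ) (hS0 : S 0 = 0) (k : ℕ) (s u : ℕ → ℝ≥0∞)
    (hu0 : u 0 = 0)
    (hord : ∀ m, 1 ≤ m → m ≤ k → u (m - 1) ≤ s m ∧ s m ≤ u m)
    (hs : ∀ m, 1 ≤ m → m ≤ k → s m ≠ ⊤ ∧ δ ≤ S (s m).toReal)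
    (hu : ∀ m, 1 ≤ m → m ≤ k → u m ≠ ⊤ ∧ S (u m).toReal ≤ 0) :
    thetaSeq S δ k ≤ u k := by
  induction k with
  | zero => rw [hu0]; rfl
  | succ n ih =>
    have ihn : thetaSeq S δ n ≤ u n := by
      apply ih
      · intro m h1 h2; exact hord m h1 (le_trans h2 (Nat.le_succ n))
      · intro m h1 h2; exact hs m h1 (le_trans h2 (Nat.le_succ n))
      · intro m h1 h2; exact hu m h1 (le_trans h2 (Nat.le_succ n))
    have h1n : 1 ≤ n + 1 := Nat.le_add_left 1 n
    have hnn : n + 1 ≤ n + 1 := le_refl _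
    obtain ⟨hsne, hsδ⟩ := hs (n + 1) h1n hnn
    obtain ⟨hune, hu0'⟩ := hu (n + 1) h1n hnn
    obtain ⟨hord1, hord2⟩ := hord (n + 1) h1n hnn
    simp only [Nat.add_sub_cancel] at hord1
    have hθn : thetaSeq S δ n ≤ s (n + 1) := le_trans ihn hord1
    have hθne : thetaSeq S δ n ≠ ⊤ := fun hh => hsne (top_le_iff.mp (hh ▸ hθn))
    have hstrict : thetaSeq S δ n < s (n + 1) := by
      rcases lt_or_eq_of_le hθn with h' | h'
      · exact h'
      · exfalso
        have := theta_le_zero hS hS0 (δ := δ) hθne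
        rw [h'] at this
        linarith
    have hτ : hitAfter S (fun x => δ ≤ x) (thetaSeq S δ n) ≤ s (n + 1) :=
      hitAfter_le_of_mem hstrict hsne hsδ
    have hτne : hitAfter S (fun x => δ ≤ x) (thetaSeq S δ n) ≠ ⊤ :=
      fun hh => hsne (top_le_iff.mp (hh ▸ hτ))
    have hτu : hitAfter S (fun x => δ ≤ x) (thetaSeq S δ n) < u (n + 1) := by
      rcases lt_or_eq_of_le (le_trans hτ hord2) with h' | h'
      · exact h'
      · exfalso
        have := tau_attain hS (δ := δ) hτne
        rw [h'] at this
        linarith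
    rw [thetaSeq_succ]
    exact hitAfter_le_of_mem hτu hune hu0'

lemma theta_finite (hS : Continuous S) (hδ : 0 < δ) (hS0 : S 0 = 0)
    {T : ℝ≥0∞} (hT : T ≠ ⊤) : {i : ℕ | 1 ≤ i ∧ thetaSeq S δ i ≤ T}.Finite := by
  by_contra hinf
  have hall : ∀ i, thetaSeq S δ i ≤ T := by
    intro i
    by_contra hi
    have hsub : {k : ℕ | 1 ≤ k ∧ thetaSeq S δ k ≤ T} ⊆ Set.Iio i := by
      intro k hk
      simp only [Set.mem_setOf_eq] at hk
      simp only [Set.mem_Iio]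
      by_contra hki
      exact hi (le_trans (thetaSeq_mono S δ (not_lt.mp hki)) hk.2)
    exact hinf ((Set.finite_Iio i).subset hsub)
  have hne : ∀ i, thetaSeq S δ i ≠ ⊤ :=
    fun i => (lt_of_le_of_lt (hall i) (lt_top_iff_ne_top.mpr hT)).ne
  set ℓ := ⨆ i, thetaSeq S δ i with hℓ
  have hℓT : ℓ ≤ T := iSup_le hall
  have hℓne : ℓ ≠ ⊤ := (lt_of_le_of_lt hℓT (lt_top_iff_ne_top.mpr hT)).ne
  have hθtend : Tendsto (thetaSeq S δ) atTop (nhds ℓ) := tendsto_atTop_iSup (thetaSeq_mono S δ)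
  have hθtend1 : Tendsto (fun i => thetaSeq S δ (i + 1)) atTop (nhds ℓ) :=
    hθtend.comp (tendsto_add_atTop_nat 1)
  set τ := fun i => hitAfter S (fun x => δ ≤ x) (thetaSeq S δ i) with hτdef
  have hτ1 : ∀ i, thetaSeq S δ i ≤ τ i := fun i => hitAfter_le_self S _ _
  have hτ2 : ∀ i, τ i ≤ thetaSeq S δ (i + 1) := by
    intro i; rw [thetaSeq_succ]; exact hitAfter_le_self S _ _
  have hτtend : Tendsto τ atTop (nhds ℓ) :=
    tendsto_of_tendsto_of_tendsto_of_le_of_le hθtend hθtend1 hτ1 hτ2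
  have hτne : ∀ i, τ i ≠ ⊤ :=
    fun i => fun hh => hne (i + 1) (top_le_iff.mp (hh ▸ hτ2 i))
  have hSθ : Tendsto (fun i => S (thetaSeq S δ i).toReal) atTop (nhds (S ℓ.toReal)) :=
    (hS.tendsto _).comp ((ENNReal.tendsto_toReal hℓne).comp hθtend)
  have hSτ : Tendsto (fun i => S (τ i).toReal) atTop (nhds (S ℓ.toReal)) :=
    (hS.tendsto _).comp ((ENNReal.tendsto_toReal hℓne).comp hτtend)
  have hle : S ℓ.toReal ≤ 0 :=
    le_of_tendsto hSθ (Eventually.of_forall fun i => theta_le_zero hS hS0 (hne i))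
  have hge : δ ≤ S ℓ.toReal :=
    ge_of_tendsto hSτ (Eventually.of_forall fun i => tau_attain hS (hτne i))
  linarith

end Theta

section ThetaCard
variable {S : ℝ → ℝ} {δ : ℝ}

lemma theta_card (hS : Continuous S) (hδ : 0 < δ) (hS0 : S 0 = 0) {t : ℝ} :
    (∀ i, 1 ≤ i → i ≤ Dnum S δ t → thetaSeq S δ i ≤ ENNReal.ofReal t) ∧
    (∀ i, 1 ≤ i → thetaSeq S δ i ≤ ENNReal.ofReal t → i ≤ Dnum S δ t) := by
  set T := ENNReal.ofReal t with hT
  have hfin : {i : ℕ | 1 ≤ i ∧ thetaSeq S δ i ≤ T}.Finite :=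
    theta_finite hS hδ hS0 (ENNReal.ofReal_lt_top).ne
  have hD : Dnum S δ t = {i : ℕ | 1 ≤ i ∧ thetaSeq S δ i ≤ T}.ncard := rfl
  rcases Set.eq_empty_or_nonempty {i : ℕ | 1 ≤ i ∧ thetaSeq S δ i ≤ T} with he | hne
  · constructor
    · intro i h1 h2
      rw [hD, he, Set.ncard_empty] at h2
      omega
    · intro i h1 h2
      exfalso
      have : i ∈ {i : ℕ | 1 ≤ i ∧ thetaSeq S δ i ≤ T} := ⟨h1, h2⟩
      rw [he] at this
      exact this
  · set F := hfin.toFinset with hF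
    have hFne : F.Nonempty := by
      rw [hF]; rwa [Set.Finite.toFinset_nonempty]
    set M := F.max' hFne with hM
    have hMmem : M ∈ {i : ℕ | 1 ≤ i ∧ thetaSeq S δ i ≤ T} := by
      have := F.max'_mem hFne
      rwa [Set.Finite.mem_toFinset] at this
    have hEq : {i : ℕ | 1 ≤ i ∧ thetaSeq S δ i ≤ T} = Set.Icc 1 M := by
      ext i
      simp only [Set.mem_setOf_eq, Set.mem_Icc]
      constructor
      · intro hi
        refine ⟨hi.1, ?_⟩
        apply F.le_max'
        rwa [Set.Finite.mem_toFinset]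
      · intro hi
        exact ⟨hi.1, le_trans (thetaSeq_mono S δ hi.2) hMmem.2⟩
    have hDM : Dnum S δ t = M := by
      rw [hD, hEq]
      have := Set.ncard_coe_finset (Finset.Icc 1 M)
      rw [Finset.coe_Icc] at this
      rw [this, Nat.card_Icc]
      omega
    constructor
    · intro i h1 h2
      rw [hDM] at h2
      have : i ∈ Set.Icc 1 M := ⟨h1, h2⟩
      rw [← hEq] at this
      exact this.2
    · intro i h1 h2
      have : i ∈ Set.Icc 1 M := by rw [← hEq]; exact ⟨h1, h2⟩
      rw [hDM]
      exact this.2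

end ThetaCard

section UP
variable {S : ℝ → ℝ} {δ : ℝ}

/-- If the path is `≤ 0` at time `a` and `≥ δ` at time `b ≤ t`, then the grid walk makes an
upcrossing `0 → δ` at some pair of consecutive grid times inside `(a, b]`. -/
lemma up_exists (hS : Continuous S) (hδ : 0 < δ) (hS0 : S 0 = 0)
    {a b : ℝ≥0∞} (hab : a ≤ b) (hbne : b ≠ ⊤)
    (hSa : S a.toReal ≤ 0) (hSb : δ ≤ S b.toReal) :
    ∃ j : ℕ, S (gridTimes S δ j).toReal = 0 ∧ S (gridTimes S δ (j + 1)).toReal = δ ∧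
      a < gridTimes S δ (j + 1) ∧ gridTimes S δ (j + 1) ≤ b := by
  have hane : a ≠ ⊤ := fun hh => hbne (top_le_iff.mp (hh ▸ hab))
  set a' := a.toReal with ha'
  set b' := b.toReal with hb'
  have hab' : a' ≤ b' := ENNReal.toReal_mono hbne hab
  -- first hitting (real) time of level δ in [a', b']
  set W := Set.Icc a' b' ∩ S ⁻¹' {δ} with hW
  have hWc : IsClosed W := isClosed_Icc.inter (isClosed_singleton.preimage hS)
  have hWne : W.Nonempty := by
    obtain ⟨w, hw, hSw⟩ := intermediate_value_Icc hab' hS.continuousOn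
      (⟨le_trans hSa hδ.le, hSb⟩ : δ ∈ Set.Icc (S a') (S b'))
    exact ⟨w, hw, hSw⟩
  have hWbdd : BddBelow W := ⟨a', fun w hw => hw.1.1⟩
  set H := sInf W with hH
  have hHW : H ∈ W := hWc.csInf_mem hWne hWbdd
  have hHa : a' ≤ H := hHW.1.1
  have hHb : H ≤ b' := hHW.1.2
  have hSH : S H = δ := hHW.2
  have haH : a' < H := by
    rcases lt_or_eq_of_le hHa with h' | h'
    · exact h'
    · exfalso; rw [← h'] at hSH; linarith
  have h0a' : 0 ≤ a' := ENNReal.toReal_nonneg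
  have h0H : 0 ≤ H := le_trans h0a' hHa
  set Hen := ENNReal.ofReal H with hHen
  have hHenb : Hen ≤ b := by
    rw [← ENNReal.ofReal_toReal hbne]
    exact ENNReal.ofReal_le_ofReal hHb
  have haHen : a < Hen := by
    rw [← ENNReal.ofReal_toReal hane]
    exact (ENNReal.ofReal_lt_ofReal_iff (lt_of_le_of_lt h0a' haH)).mpr haH
  -- last grid index J with grid time ≤ H
  have hJfin : {n : ℕ | gridTimes S δ n ≤ Hen}.Finite :=
    gridTimes_finite hS hδ hS0 ENNReal.ofReal_lt_top.ne
  have h0mem : 0 ∈ hJfin.toFinset := by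
    rw [Set.Finite.mem_toFinset]
    show gridTimes S δ 0 ≤ Hen
    exact zero_le
  set J := hJfin.toFinset.max' ⟨0, h0mem⟩ with hJ
  have hJ1 : gridTimes S δ J ≤ Hen := by
    have := hJfin.toFinset.max'_mem ⟨0, h0mem⟩
    rwa [Set.Finite.mem_toFinset] at this
  have hJ2 : Hen < gridTimes S δ (J + 1) := by
    by_contra hcon
    push_neg at hcon
    have : J + 1 ∈ hJfin.toFinset := by rwa [Set.Finite.mem_toFinset]
    have := hJfin.toFinset.le_max' _ this
    omega
  have hJne : gridTimes S δ J ≠ ⊤ := (lt_of_le_of_lt hJ1 ENNReal.ofReal_lt_top).ne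
  have hJr : (gridTimes S δ J).toReal ≤ H := ENNReal.toReal_le_of_le_ofReal h0H hJ1
  -- the value at grid time J is δ
  have hBH := grid_between hS hδ hS0 hJne hJr hJ2
  obtain ⟨m, hm⟩ := gridTimes_val_mem hS hδ hS0 J hJne
  have hvJ : S (gridTimes S δ J).toReal = δ := by
    rw [hSH, hm] at hBH
    rcases abs_lt.mp hBH with ⟨hl, hr⟩
    have hm0 : (0 : ℝ) < (m : ℝ) := by nlinarith
    have hm2 : (m : ℝ) < 2 := by nlinarith
    have h1 : (0 : ℤ) < m := by exact_mod_cast hm0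
    have h2 : m < 2 := by exact_mod_cast hm2
    have : m = 1 := by omega
    rw [hm, this]; push_cast; ring
  -- a < grid time J
  have haJ : a < gridTimes S δ J := by
    by_contra hcon
    push_neg at hcon
    have h1 : (gridTimes S δ J).toReal ≤ a' := ENNReal.toReal_mono hane hcon
    have h2 : ENNReal.ofReal a' < gridTimes S δ (J + 1) := by
      rw [ENNReal.ofReal_toReal hane]
      exact lt_of_lt_of_le haHen hJ2.le
    have := grid_between hS hδ hS0 hJne h1 h2
    rw [hvJ] at this
    rcases abs_lt.mp this with ⟨hl, _⟩
    linarith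
  -- minimal index K ≤ J with value δ and grid time > a
  set Aset := {j : ℕ | j ≤ J ∧ a < gridTimes S δ j ∧ S (gridTimes S δ j).toReal = δ} with hAset
  have hAne : Aset.Nonempty := ⟨J, le_refl J, haJ, hvJ⟩
  set K := sInf Aset with hK
  have hKmem : K ∈ Aset := Nat.sInf_mem hAne
  have hKmin : ∀ j, j < K → j ∉ Aset := fun j hj => Nat.notMem_of_lt_sInf hj
  have hK0 : 0 < K := by
    rcases Nat.eq_zero_or_pos K with h0 | h0
    · exfalso
      have := hKmem.2.2
      rw [h0] at this
      have hg0 : gridTimes S δ 0 = 0 := rfl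
      rw [hg0] at this
      rw [ENNReal.toReal_zero, hS0] at this
      linarith
    · exact h0
  -- maximal index m < K where the walk was ≤ 0 or the grid time was ≤ a
  set Bset := {j : ℕ | j < K ∧ (S (gridTimes S δ j).toReal ≤ 0 ∨ gridTimes S δ j ≤ a)} with hBset
  have hBfin : Bset.Finite := (Set.finite_Iio K).subset fun j hj => hj.1
  have h0B : 0 ∈ hBfin.toFinset := by
    rw [Set.Finite.mem_toFinset]
    refine ⟨hK0, Or.inl ?_⟩
    show S (gridTimes S δ 0).toReal ≤ 0
    show S (ENNReal.toReal 0) ≤ 0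
    rw [ENNReal.toReal_zero, hS0]
  set M := hBfin.toFinset.max' ⟨0, h0B⟩ with hM
  have hMmem : M ∈ Bset := by
    have := hBfin.toFinset.max'_mem ⟨0, h0B⟩
    rwa [Set.Finite.mem_toFinset] at this
  have hMmax : ∀ j ∈ Bset, j ≤ M := by
    intro j hj
    apply hBfin.toFinset.le_max'
    rwa [Set.Finite.mem_toFinset]
  have hMK : M + 1 ≤ K := hMmem.1
  -- properties of index M + 1
  have hm1 : ¬(S (gridTimes S δ (M + 1)).toReal ≤ 0 ∨ gridTimes S δ (M + 1) ≤ a) := by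
    intro hbad
    rcases lt_or_eq_of_le hMK with hlt | heq
    · have : M + 1 ∈ Bset := ⟨hlt, hbad⟩
      have := hMmax _ this
      omega
    · rw [heq] at hbad
      rcases hbad with hb1 | hb2
      · rw [hKmem.2.2] at hb1; linarith
      · exact absurd hKmem.2.1 (not_lt.mpr hb2)
  push_neg at hm1
  obtain ⟨hm1a, hm1b⟩ := hm1
  have hm1a' : 0 < S (gridTimes S δ (M + 1)).toReal := hm1a
  -- grid time M+1 is within reach
  have hgm1H : gridTimes S δ (M + 1) ≤ Hen :=
    le_trans (gridTimes_mono S δ hMK) (le_trans (gridTimes_mono S δ hKmem.1) hJ1)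
  have hgm1b : gridTimes S δ (M + 1) ≤ b := le_trans hgm1H hHenb
  have hgm1ne : gridTimes S δ (M + 1) ≠ ⊤ := (lt_of_le_of_lt hgm1b (lt_top_iff_ne_top.mpr hbne)).ne
  have hgmne : gridTimes S δ M ≠ ⊤ :=
    fun hh => hgm1ne (top_le_iff.mp (hh ▸ gridTimes_mono S δ (Nat.le_succ M)))
  have hadj := grid_adj hS hδ hS0 hgm1ne
  obtain ⟨m₂, hm₂⟩ := gridTimes_val_mem hS hδ hS0 M hgmne
  -- the walk value at M is 0 and at M+1 is δ
  by_cases hv : S (gridTimes S δ M).toReal ≤ 0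
  · have hplus : S (gridTimes S δ (M + 1)).toReal = S (gridTimes S δ M).toReal + δ := by
      rcases hadj with h' | h'
      · exact h'
      · exfalso; rw [h'] at hm1a'; linarith
    have hvm : S (gridTimes S δ M).toReal = 0 := by
      rw [hm₂] at hv hplus ⊢
      rw [hplus] at hm1a'
      have hmlow : (-1 : ℝ) < (m₂ : ℝ) := by nlinarith
      have hmhigh : (m₂ : ℝ) ≤ 0 := by nlinarith
      have h1 : (-1 : ℤ) < m₂ := by exact_mod_cast hmlow
      have h2 : m₂ ≤ 0 := by exact_mod_cast hmhigh
      have : m₂ = 0 := by omega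
      rw [this]; push_cast; ring
    refine ⟨M, hvm, ?_, hm1b, hgm1b⟩
    rw [hplus, hvm, zero_add]
  · -- then gridTimes M ≤ a, and we derive a contradiction
    have hva : gridTimes S δ M ≤ a := by
      rcases hMmem.2 with h' | h'
      · exact absurd h' hv
      · exact h'
    exfalso
    have h1 : (gridTimes S δ M).toReal ≤ a' := ENNReal.toReal_mono hane hva
    have h2 : ENNReal.ofReal a' < gridTimes S δ (M + 1) := by
      rw [ENNReal.ofReal_toReal hane]
      exact hm1b
    have hbv := grid_between hS hδ hS0 hgmne h1 h2
    -- value at M is a positive grid point, hence ≥ δ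
    have hvpos : 0 < S (gridTimes S δ M).toReal := lt_of_not_ge hv
    have hvδ : δ ≤ S (gridTimes S δ M).toReal := by
      rw [hm₂] at hvpos ⊢
      have hm0 : (0 : ℝ) < (m₂ : ℝ) := by nlinarith
      have h1' : (0 : ℤ) < m₂ := by exact_mod_cast hm0
      have : (1 : ℝ) ≤ (m₂ : ℝ) := by exact_mod_cast h1'
      nlinarith
    rcases abs_lt.mp hbv with ⟨hl, _⟩
    linarith

end UP

section Key
variable {S : ℝ → ℝ} {δ : ℝ}

lemma clip_of_le {t : ℝ} (ht : 0 ≤ t) {a : ℝ≥0∞} (h : a ≤ ENNReal.ofReal t) :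
    clip t a = a.toReal := by
  have ha : a < ⊤ := lt_of_le_of_lt h ENNReal.ofReal_lt_top
  rw [clip, if_pos ha]
  exact min_eq_right (ENNReal.toReal_le_of_le_ofReal ht h)

lemma clip_of_gt {t : ℝ} (ht : 0 ≤ t) {a : ℝ≥0∞} (h : ENNReal.ofReal t < a) :
    clip t a = t := by
  rw [clip]
  split_ifs with h'
  · exact min_eq_left ((ENNReal.ofReal_lt_iff_lt_toReal ht h'.ne).mp h).le
  · rfl

lemma key_estimate (hS : Continuous S) (hS0 : S 0 = 0) (hδ : 0 < δ)
    {p t : ℝ} (hp : 1 ≤ p) (ht : 0 < t) :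
    (Dnum S δ t : ℝ) * δ ^ (p - 1) ≤ Lsum S p δ t 0 ∧
    Lsum S p δ t 0 ≤ ((Dnum S δ t : ℝ) + 2) * δ ^ (p - 1) := by
  classical
  set T := ENNReal.ofReal t with hT
  set q := p - 1 with hq
  have hq0 : 0 ≤ q := by rw [hq]; linarith
  have hδq : 0 ≤ δ ^ q := Real.rpow_nonneg hδ.le q
  -- the grid index horizon N
  have hNfin : {n : ℕ | gridTimes S δ n ≤ T}.Finite :=
    gridTimes_finite hS hδ hS0 ENNReal.ofReal_lt_top.ne
  have h0N : 0 ∈ hNfin.toFinset := by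
    rw [Set.Finite.mem_toFinset]
    show gridTimes S δ 0 ≤ T
    exact zero_le
  set N := hNfin.toFinset.max' ⟨0, h0N⟩ with hN
  have hN1 : gridTimes S δ N ≤ T := by
    have := hNfin.toFinset.max'_mem ⟨0, h0N⟩
    rwa [Set.Finite.mem_toFinset] at this
  have hNle : ∀ n, gridTimes S δ n ≤ T → n ≤ N := by
    intro n hn
    apply hNfin.toFinset.le_max'
    rwa [Set.Finite.mem_toFinset]
  have hN2 : T < gridTimes S δ (N + 1) := by
    by_contra hcon
    push_neg at hcon
    have := hNle _ hcon
    omega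
  have hgle : ∀ j, j ≤ N → gridTimes S δ j ≤ T := fun j hj =>
    le_trans (gridTimes_mono S δ hj) hN1
  have hgne : ∀ j, j ≤ N → gridTimes S δ j ≠ ⊤ := fun j hj =>
    (lt_of_le_of_lt (hgle j hj) ENNReal.ofReal_lt_top).ne
  -- clip values
  have hclip1 : ∀ j, j ≤ N → clip t (gridTimes S δ j) = (gridTimes S δ j).toReal :=
    fun j hj => clip_of_le ht.le (hgle j hj)
  have hclip2 : ∀ j, N + 1 ≤ j → clip t (gridTimes S δ j) = t := fun j hj =>
    clip_of_gt ht.le (lt_of_lt_of_le hN2 (gridTimes_mono S δ hj))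
  set f : ℕ → ℝ := fun j => Set.indicator
    (Set.Ico (S (clip t (gridTimes S δ j))) (S (clip t (gridTimes S δ (j + 1)))))
    (fun _ => |S (clip t (gridTimes S δ (j + 1))) - 0| ^ (p - 1)) 0 with hf
  have hLsum : Lsum S p δ t 0 = ∑ j ∈ Finset.range (N + 1), f j := by
    rw [Lsum]
    apply tsum_eq_sum
    intro j hj
    rw [Finset.mem_range] at hj
    push_neg at hj
    have h1 : clip t (gridTimes S δ j) = t := hclip2 j hj
    have h2 : clip t (gridTimes S δ (j + 1)) = t := hclip2 (j + 1) (by omega)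
    rw [h1, h2, Set.Ico_self, Set.indicator_empty]
  -- value of interior terms
  set upF := (Finset.range N).filter
    (fun j => S (gridTimes S δ j).toReal = 0 ∧ S (gridTimes S δ (j + 1)).toReal = δ) with hupF
  set U := upF.card with hU
  have hterm : ∀ j < N, f j = if S (gridTimes S δ j).toReal = 0 ∧
      S (gridTimes S δ (j + 1)).toReal = δ then δ ^ q else 0 := by
    intro j hj
    have hc1 := hclip1 j hj.le
    have hc2 := hclip1 (j + 1) hj
    rw [hf]
    simp only
    rw [hc1, hc2]
    split_ifs with hcase
    · rw [hcase.1, hcase.2]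
      rw [Set.indicator_of_mem (Set.mem_Ico.mpr ⟨le_refl 0, hδ⟩)]
      rw [sub_zero, abs_of_pos hδ]
    · have hnot : (0 : ℝ) ∉ Set.Ico (S (gridTimes S δ j).toReal)
          (S (gridTimes S δ (j + 1)).toReal) := by
        rintro ⟨h1, h2⟩
        have hadj := grid_adj hS hδ hS0 (hgne (j + 1) hj)
        obtain ⟨m, hm⟩ := gridTimes_val_mem hS hδ hS0 j (hgne j hj.le)
        have hplus : S (gridTimes S δ (j + 1)).toReal = S (gridTimes S δ j).toReal + δ := by
          rcases hadj with h' | h'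
          · exact h'
          · exfalso; rw [h'] at h2; linarith
        apply hcase
        have hvj : S (gridTimes S δ j).toReal = 0 := by
          rw [hm] at h1 ⊢
          rw [hplus, hm] at h2
          have hmlow : (-1 : ℝ) < (m : ℝ) := by nlinarith
          have hmhigh : (m : ℝ) ≤ 0 := by nlinarith
          have hl : (-1 : ℤ) < m := by exact_mod_cast hmlow
          have hh : m ≤ 0 := by exact_mod_cast hmhigh
          have : m = 0 := by omega
          rw [this]; push_cast; ring
        exact ⟨hvj, by rw [hplus, hvj, zero_add]⟩
      rw [Set.indicator_of_notMem hnot]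
  -- the tail term
  have hfN0 : 0 ≤ f N := by
    rw [hf]
    apply Set.indicator_nonneg
    intro x _
    exact Real.rpow_nonneg (abs_nonneg _) _
  have hfN1 : f N ≤ δ ^ q := by
    rw [hf]
    simp only
    rw [hclip1 N (le_refl N), hclip2 (N + 1) (le_refl _)]
    by_cases hmem : (0 : ℝ) ∈ Set.Ico (S (gridTimes S δ N).toReal) (S t)
    · rw [Set.indicator_of_mem hmem]
      obtain ⟨h1, h2⟩ := hmem
      have hbv := grid_between hS hδ hS0 (hgne N (le_refl N))
        (ENNReal.toReal_le_of_le_ofReal ht.le hN1) hN2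
      rcases abs_lt.mp hbv with ⟨_, hr⟩
      have hSt : S t ≤ δ := by linarith
      rw [sub_zero, abs_of_pos h2]
      exact Real.rpow_le_rpow h2.le hSt hq0
    · rw [Set.indicator_of_notMem hmem]
      exact hδq
  have hsum : ∑ j ∈ Finset.range N, f j = (U : ℝ) * δ ^ q := by
    rw [Finset.sum_congr rfl (fun j hj => hterm j (Finset.mem_range.mp hj))]
    rw [← Finset.sum_filter]
    rw [Finset.sum_const, hU, nsmul_eq_mul]
  have hLval : Lsum S p δ t 0 = (U : ℝ) * δ ^ q + f N := by
    rw [hLsum, Finset.sum_range_succ, hsum]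
  -- downcrossing count
  set D := Dnum S δ t with hD
  obtain ⟨hF1, hF3⟩ := theta_card hS hδ hS0 (S := S) (δ := δ) (t := t)
  -- D ≤ U
  have hθT : ∀ i, i ≤ D → thetaSeq S δ i ≤ T := by
    intro i hi
    cases i with
    | zero => exact zero_le
    | succ k => exact hF1 (k + 1) (by omega) hi
  have hex : ∀ i, i < D → ∃ j : ℕ,
      S (gridTimes S δ j).toReal = 0 ∧ S (gridTimes S δ (j + 1)).toReal = δ ∧
      thetaSeq S δ i < gridTimes S δ (j + 1) ∧
      gridTimes S δ (j + 1) ≤ hitAfter S (fun x => δ ≤ x) (thetaSeq S δ i) := by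
    intro i hi
    set τ := hitAfter S (fun x => δ ≤ x) (thetaSeq S δ i) with hτ
    have hτθ : τ ≤ thetaSeq S δ (i + 1) := by
      rw [thetaSeq_succ]
      exact hitAfter_le_self S _ _
    have hτT : τ ≤ T := le_trans hτθ (hθT (i + 1) hi)
    have hτne : τ ≠ ⊤ := (lt_of_le_of_lt hτT ENNReal.ofReal_lt_top).ne
    have hθne : thetaSeq S δ i ≠ ⊤ :=
      (lt_of_le_of_lt (hθT i hi.le) ENNReal.ofReal_lt_top).ne
    have hSτ : δ ≤ S τ.toReal := tau_attain hS hτne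
    have hSθ : S (thetaSeq S δ i).toReal ≤ 0 := theta_le_zero hS hS0 hθne
    have hθτ : thetaSeq S δ i ≤ τ := hitAfter_le_self S _ _
    exact up_exists hS hδ hS0 hθτ hτne hSθ hSτ
  set F : ℕ → ℕ := fun i => if h : i < D then (hex i h).choose else 0 with hFdef
  have hFspec : ∀ i, ∀ h : i < D,
      S (gridTimes S δ (F i)).toReal = 0 ∧ S (gridTimes S δ (F i + 1)).toReal = δ ∧
      thetaSeq S δ i < gridTimes S δ (F i + 1) ∧
      gridTimes S δ (F i + 1) ≤ hitAfter S (fun x => δ ≤ x) (thetaSeq S δ i) := by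
    intro i h
    rw [hFdef]
    simp only [dif_pos h]
    exact (hex i h).choose_spec
  have hτθsucc : ∀ i, hitAfter S (fun x => δ ≤ x) (thetaSeq S δ i) ≤ thetaSeq S δ (i + 1) := by
    intro i
    rw [thetaSeq_succ]
    exact hitAfter_le_self S _ _
  have hDU : D ≤ U := by
    have hmaps : ∀ i ∈ Finset.range D, F i ∈ upF := by
      intro i hi
      rw [Finset.mem_range] at hi
      obtain ⟨h1, h2, h3, h4⟩ := hFspec i hi
      rw [hupF, Finset.mem_filter, Finset.mem_range]
      have hτT : hitAfter S (fun x => δ ≤ x) (thetaSeq S δ i) ≤ T :=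
        le_trans (hτθsucc i) (hθT (i + 1) hi)
      have hgT : gridTimes S δ (F i + 1) ≤ T := le_trans h4 hτT
      have := hNle _ hgT
      exact ⟨by omega, h1, h2⟩
    have hinj : Set.InjOn F ↑(Finset.range D) := by
      intro i hi i' hi' heq
      rw [Finset.coe_range, Set.mem_Iio] at hi hi'
      by_contra hne
      have hkey : ∀ k k', k < k' → k' < D → gridTimes S δ (F k + 1) < gridTimes S δ (F k' + 1) := by
        intro k k' hkk hk'
        calc gridTimes S δ (F k + 1)
            ≤ thetaSeq S δ (k + 1) := le_trans (hFspec k (lt_trans hkk hk')).2.2.2 (hτθsucc k)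
          _ ≤ thetaSeq S δ k' := thetaSeq_mono S δ hkk
          _ < gridTimes S δ (F k' + 1) := (hFspec k' hk').2.2.1
      rcases lt_or_gt_of_ne hne with hlt | hlt
      · have := hkey i i' hlt hi'
        rw [heq] at this
        exact lt_irrefl _ this
      · have := hkey i' i hlt hi
        rw [heq] at this
        exact lt_irrefl _ this
    have := Finset.card_le_card_of_injOn F hmaps hinj
    rwa [Finset.card_range] at this
  have hUD : U ≤ D + 1 := by
    rcases le_or_gt U 1 with hU1 | hU1
    · omega
    · set e := upF.orderIsoOfFin rfl with he
      set ee : ℕ → ℕ := fun m => if h : m < U then (e ⟨m, h⟩ : ℕ) else 0 with hee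
      have hee_mem : ∀ m, m < U → ee m ∈ upF := by
        intro m h
        rw [hee]
        simp only [dif_pos h]
        exact (e ⟨m, h⟩).2
      have hee_lt : ∀ m m', m < m' → m' < U → ee m < ee m' := by
        intro m m' h h'
        rw [hee]
        simp only [dif_pos (lt_trans h h'), dif_pos h']
        exact Subtype.coe_lt_coe.mpr (e.lt_iff_lt.mpr (Fin.mk_lt_mk.mpr h))
      have hval : ∀ m, m < U → S (gridTimes S δ (ee m)).toReal = 0 ∧
          S (gridTimes S δ (ee m + 1)).toReal = δ ∧ ee m < N := by
        intro m h
        have := hee_mem m h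
        rw [hupF, Finset.mem_filter, Finset.mem_range] at this
        exact ⟨this.2.1, this.2.2, this.1⟩
      have hθU : thetaSeq S δ (U - 1) ≤ gridTimes S δ (ee (U - 1)) := by
        have := theta_le hS hδ hS0 (U - 1)
          (fun m => gridTimes S δ (ee (m - 1) + 1))
          (fun m => if m = 0 then 0 else gridTimes S δ (ee m))
          (if_pos rfl) ?_ ?_ ?_
        · simp only [if_neg (show ¬(U - 1 = 0) by omega)] at this
          exact this
        · intro m h1 h2
          have hmU : m < U := by omega
          have hm1U : m - 1 < U := by omega
          constructor
          · rcases Nat.eq_or_lt_of_le h1 with hm1 | hm1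
            · have hz : m - 1 = 0 := by omega
              simp only [hz, if_pos]
              exact zero_le
            · simp only [if_neg (show ¬(m - 1 = 0) by omega)]
              exact gridTimes_mono S δ (Nat.le_succ _)
          · simp only [if_neg (show ¬(m = 0) by omega)]
            exact gridTimes_mono S δ (hee_lt (m - 1) m (by omega) hmU)
        · intro m h1 h2
          have hm1U : m - 1 < U := by omega
          obtain ⟨hv0, hvδ, hvN⟩ := hval (m - 1) hm1U
          exact ⟨hgne (ee (m - 1) + 1) (by omega), hvδ.ge⟩
        · intro m h1 h2
          have hmU : m < U := by omega
          obtain ⟨hv0, hvδ, hvN⟩ := hval m hmU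
          simp only [if_neg (show ¬(m = 0) by omega)]
          exact ⟨hgne (ee m) (by omega), hv0.le⟩
      have hee_le : gridTimes S δ (ee (U - 1)) ≤ T := hgle _ (hval (U - 1) (by omega)).2.2.le
      have := hF3 (U - 1) (by omega) (le_trans hθU hee_le)
      omega
  constructor
  · rw [hLval]
    have hcast : (D : ℝ) ≤ (U : ℝ) := Nat.cast_le.mpr hDU
    nlinarith
  · rw [hLval]
    have hcast : (U : ℝ) ≤ (D : ℝ) + 1 := by exact_mod_cast hUD
    nlinarith

end Key

section Final

lemma pow_rpow_swap (r c : ℝ) (hr : 0 ≤ r) (n : ℕ) : ((r ^ n : ℝ)) ^ c = (r ^ c) ^ n := by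
  rw [← Real.rpow_natCast r n, ← Real.rpow_mul hr, mul_comm, Real.rpow_mul hr,
    Real.rpow_natCast]


/-- Behaviour of the number of downcrossings `D^{δₙ}_t(S)`, `δₙ = 2⁻ⁿ`, for a path with
strictly positive continuous local time `L^{π,p}_t(S)` of order `p` at zero:
(i) if `p < 2` then `δₙ D^{δₙ}_t → 0`; (ii) if `p > 2` then
`δₙ^{p-1} D^{δₙ}_t → L^{π,p}_t(S)` and `δₙ D^{δₙ}_t → ∞`; (iii) if `p = 2` then
`δₙ D^{δₙ}_t → L^{π,2}_t(S)`. -/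
theorem downcrossing_asymptotics (S : ℝ → ℝ) (hS : Continuous S) (hS0 : S 0 = 0)
    (p t : ℝ) (hp : 1 ≤ p) (ht : 0 < t) (L : ℝ) (hLpos : 0 < L)
    (hconv : Tendsto (fun n : ℕ => Lsum S p ((1 / 2) ^ n) t 0) atTop (nhds L)) :
    (p < 2 →
      Tendsto (fun n : ℕ => ((1 : ℝ) / 2) ^ n * (Dnum S ((1 / 2) ^ n) t : ℝ))
        atTop (nhds 0)) ∧
    (2 < p →
      Tendsto (fun n : ℕ => (((1 : ℝ) / 2) ^ n) ^ (p - 1) * (Dnum S ((1 / 2) ^ n) t : ℝ))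
        atTop (nhds L) ∧
      Tendsto (fun n : ℕ => ((1 : ℝ) / 2) ^ n * (Dnum S ((1 / 2) ^ n) t : ℝ))
        atTop atTop) ∧
    (p = 2 →
      Tendsto (fun n : ℕ => ((1 : ℝ) / 2) ^ n * (Dnum S ((1 / 2) ^ n) t : ℝ))
        atTop (nhds L)) := by
  set δn : ℕ → ℝ := fun n => ((1 : ℝ) / 2) ^ n with hδn
  have hδpos : ∀ n, 0 < δn n := fun n => pow_pos (by norm_num) n
  set Dn : ℕ → ℝ := fun n => (Dnum S (δn n) t : ℝ) with hDn
  set Ls : ℕ → ℝ := fun n => Lsum S p (δn n) t 0 with hLs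
  set en : ℕ → ℝ := fun n => (δn n) ^ (p - 1) with hen
  have hkey : ∀ n, Dn n * en n ≤ Ls n ∧ Ls n ≤ (Dn n + 2) * en n :=
    fun n => key_estimate hS hS0 (hδpos n) hp ht
  have hen_nonneg : ∀ n, 0 ≤ en n := fun n => Real.rpow_nonneg (hδpos n).le _
  have hDn_nonneg : ∀ n, 0 ≤ Dn n := fun n => Nat.cast_nonneg _
  -- geometric decay of positive rpow powers
  have hgeo : ∀ c : ℝ, 0 < c → Tendsto (fun n : ℕ => (δn n) ^ c) atTop (nhds 0) := by
    intro c hc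
    have heq : (fun n : ℕ => (δn n) ^ c) = fun n : ℕ => (((1 : ℝ) / 2) ^ c) ^ n := by
      funext n
      exact pow_rpow_swap (1 / 2) c (by norm_num) n
    rw [heq]
    apply tendsto_pow_atTop_nhds_zero_of_lt_one
    · exact Real.rpow_nonneg (by norm_num) c
    · exact Real.rpow_lt_one (by norm_num) (by norm_num) hc
  -- for p > 1 : Dn * en → L
  have hDe : 1 < p → Tendsto (fun n => Dn n * en n) atTop (nhds L) := by
    intro hp1
    have htende : Tendsto en atTop (nhds 0) := hgeo (p - 1) (by linarith)
    have hlow : Tendsto (fun n => Ls n - 2 * en n) atTop (nhds L) := by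
      have := hconv.sub (htende.const_mul 2)
      simpa using this
    apply tendsto_of_tendsto_of_tendsto_of_le_of_le hlow hconv
    · intro n
      have h := (hkey n).2
      have h2 : (Dn n + 2) * en n = Dn n * en n + 2 * en n := by ring
      rw [h2] at h
      show Ls n - 2 * en n ≤ Dn n * en n
      linarith
    · intro n
      exact (hkey n).1
  -- the δ * D product identity
  have hprod : ∀ n, δn n * Dn n = (δn n) ^ (2 - p) * (Dn n * en n) := by
    intro n
    have h1 : (δn n) ^ (2 - p) * en n = δn n := by
      rw [hen]
      simp only
      rw [← Real.rpow_add (hδpos n)]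
      norm_num
    calc δn n * Dn n = ((δn n) ^ (2 - p) * en n) * Dn n := by rw [h1]
      _ = (δn n) ^ (2 - p) * (Dn n * en n) := by ring
  refine ⟨?_, ?_, ?_⟩
  · -- p < 2
    intro hp2
    have hup : Tendsto (fun n => (δn n) ^ (2 - p) * Ls n) atTop (nhds 0) := by
      have := (hgeo (2 - p) (by linarith)).mul hconv
      simpa using this
    apply tendsto_of_tendsto_of_tendsto_of_le_of_le (tendsto_const_nhds) hup
    · intro n
      show (0 : ℝ) ≤ δn n * Dn n
      have := hδpos n
      have := hDn_nonneg n
      positivity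
    · intro n
      show δn n * Dn n ≤ (δn n) ^ (2 - p) * Ls n
      rw [hprod n]
      have h := (hkey n).1
      have h2 : (0 : ℝ) ≤ (δn n) ^ (2 - p) := Real.rpow_nonneg (hδpos n).le _
      nlinarith
  · -- p > 2
    intro hp2
    constructor
    · have := hDe (by linarith)
      have heq : (fun n => Dn n * en n) = fun n : ℕ =>
          (((1 : ℝ) / 2) ^ n) ^ (p - 1) * (Dnum S ((1 / 2) ^ n) t : ℝ) := by
        funext n
        exact mul_comm _ _
      rwa [heq] at this
    · have hfac : Tendsto (fun n : ℕ => (δn n) ^ (2 - p)) atTop atTop := by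
        have heq : (fun n : ℕ => (δn n) ^ (2 - p)) = fun n : ℕ => (((1 : ℝ) / 2) ^ (2 - p)) ^ n := by
          funext n
          exact pow_rpow_swap (1 / 2) (2 - p) (by norm_num) n
        rw [heq]
        apply tendsto_pow_atTop_atTop_of_one_lt
        rw [Real.one_lt_rpow_iff_of_pos (by norm_num : (0:ℝ) < 1/2)]
        right
        constructor
        · norm_num
        · linarith
      have := hfac.atTop_mul_pos hLpos (hDe (by linarith))
      have heq2 : (fun n => (δn n) ^ (2 - p) * (Dn n * en n)) =
          fun n : ℕ => ((1 : ℝ) / 2) ^ n * (Dnum S ((1 / 2) ^ n) t : ℝ) := by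
        funext n
        rw [← hprod n]
      rwa [heq2] at this
  · -- p = 2
    intro hp2
    have := hDe (by linarith)
    have heq : (fun n => Dn n * en n) =
        fun n : ℕ => ((1 : ℝ) / 2) ^ n * (Dnum S ((1 / 2) ^ n) t : ℝ) := by
      funext n
      rw [hen]
      simp only
      rw [hp2]
      norm_num
      exact mul_comm _ _
    rwa [heq] at this
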